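/- arXiv:2109.14309 — 9 statements merged into one kernel-verified Lean document; each statement's English description precedes it below -/
import Mathlib

section
/- The square loss λ(f,ω) = (f-ω)^2 with f ∈ [0,1] and ω ∈ {0,1} is η-mixable for every 0 < η ≤ 2: for any probability vector (q_1,…,q_N) and forecasts f_1,…,f_N ∈ [0,1], there exists f ∈ [0,1] such that exp(-η(f-ω)^2) ≥ Σ_i q_i exp(-η(f_i-ω)^2) for both ω = 0 and ω = 1. -/
/-!
Write `E₀ g = e^{-η g²}` and `E₁ g = e^{-η (g-1)²}`. For every `p ∈ [0,1]` the curve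
`u ↦ (E₀ u, E₁ u)` lies below the line `(1-p) x / E₀ p + p y / E₁ p = 1` through its point at `p`:
after factoring out `e^{-η (u-p)²}` this is Hoeffding's lemma `E e^{s (X - p)} ≤ e^{s²/8}` for
`X ~ Bernoulli p` at `s = 2η (u-p)`, and the leftover factor `e^{η (η-2) (u-p)² / 2}` is at most `1`
because `η ≤ 2`. The mixture `(S₀, S₁)` of the experts' points lies below every such line. Choosing
`p` by the intermediate value theorem so that `S₀ / E₀ p = S₁ / E₁ p`, the line inequality bounds
this common ratio by `1`, so `g = p` works.
-/

open Finset
open Real ProbabilityTheory MeasureTheory unitInterval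

lemma centered_bernoulli_mgf_le (p : I) (s : ℝ) :
    p * exp (s * (1 - p)) + (1 - p) * exp (-(s * p)) ≤ exp (s ^ 2 / 8) := by
  let X : Bool → ℝ := fun b => if b then 1 else 0
  have hX : ∫ b, X b ∂Ber(true, false, p) = p := by simp [X, integral_bernoulliMeasure]
  have h := (hasSubgaussianMGF_of_mem_Icc (X := X) (μ := Ber(true, false, p)) (a := 0) (b := 1)
    Measurable.of_discrete.aemeasurable (ae_of_all _ fun b => by cases b <;> simp [X])).mgf_le s
  rw [hX, mgf, integral_bernoulliMeasure] at h
  norm_num [X] at h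
  convert h using 2
  ring

lemma sq_loss_supporting_line {η : ℝ} (hη0 : 0 ≤ η) (hη2 : η ≤ 2) (p : I) (u : ℝ) :
    p * exp (η * (p - 1) ^ 2) * exp (-η * (u - 1) ^ 2)
      + (1 - p) * exp (η * p ^ 2) * exp (-η * u ^ 2) ≤ 1 := by
  obtain ⟨d, rfl⟩ : ∃ d, u = p + d := ⟨u - p, by ring⟩
  have e₁ : exp (η * (p - 1) ^ 2) * exp (-η * (p + d - 1) ^ 2)
      = exp (-η * d ^ 2) * exp (2 * η * d * (1 - p)) := by
    rw [← exp_add, ← exp_add]; ring_nf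
  have e₀ : exp (η * p ^ 2) * exp (-η * (p + d) ^ 2)
      = exp (-η * d ^ 2) * exp (-(2 * η * d * p)) := by
    rw [← exp_add, ← exp_add]; ring_nf
  calc _ = exp (-η * d ^ 2)
          * (p * exp (2 * η * d * (1 - p)) + (1 - p) * exp (-(2 * η * d * p))) := by
        rw [mul_assoc, e₁, mul_assoc _ (exp _), e₀]; ring
    _ ≤ exp (-η * d ^ 2) * exp ((2 * η * d) ^ 2 / 8) := by
        gcongr; exact centered_bernoulli_mgf_le p _
    _ = exp (η * (η - 2) * d ^ 2 / 2) := by rw [← exp_add]; ring_nf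
    _ ≤ 1 := exp_le_one_iff.2 <| by
        have : η * (η - 2) ≤ 0 := mul_nonpos_of_nonneg_of_nonpos hη0 (by linarith)
        nlinarith [sq_nonneg d]

lemma sum_mul_exp_sq_loss_supporting_line {ι : Type*} [Fintype ι] {η : ℝ} (hη0 : 0 ≤ η)
    (hη2 : η ≤ 2) {q : ι → ℝ} (hq0 : ∀ i, 0 ≤ q i) (hq1 : ∑ i, q i = 1) (f : ι → ℝ) (p : I) :
    p * exp (η * (p - 1) ^ 2) * ∑ i, q i * exp (-η * (f i - 1) ^ 2)
      + (1 - p) * exp (η * p ^ 2) * ∑ i, q i * exp (-η * f i ^ 2) ≤ 1 := by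
  calc _ = ∑ i, q i * (p * exp (η * (p - 1) ^ 2) * exp (-η * (f i - 1) ^ 2)
          + (1 - p) * exp (η * p ^ 2) * exp (-η * f i ^ 2)) := by
        rw [mul_sum, mul_sum, ← sum_add_distrib]; congr! 1; ring
    _ ≤ ∑ i, q i * 1 := by
        gcongr with i
        · exact hq0 i
        · exact sq_loss_supporting_line hη0 hη2 p (f i)
    _ = 1 := by simpa using hq1

lemma exp_neg_mul_sq_mem_Icc {η u ω : ℝ} (hη0 : 0 ≤ η) (hu : u ∈ Set.Icc 0 1)
    (hω : ω ∈ Set.Icc 0 1) : exp (-η * (u - ω) ^ 2) ∈ Set.Icc (exp (-η)) 1 := by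
  have h : (u - ω) ^ 2 ≤ 1 := by nlinarith [hu.1, hu.2, hω.1, hω.2]
  constructor
  · gcongr; nlinarith
  · exact exp_le_one_iff.2 (by nlinarith [sq_nonneg (u - ω)])

lemma le_exp_neg_iff_mul_exp_le_one {x y : ℝ} : x ≤ exp (-y) ↔ x * exp y ≤ 1 := by
  rw [exp_neg, inv_eq_one_div, le_div_iff₀ (exp_pos y)]

lemma exp_neg_le_iff_one_le_mul_exp {x y : ℝ} : exp (-y) ≤ x ↔ 1 ≤ x * exp y := by
  rw [exp_neg, inv_eq_one_div, div_le_iff₀ (exp_pos y)]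

lemma exists_mem_Icc_mul_exp_sq_eq {η x y : ℝ} (hx : x ∈ Set.Icc (exp (-η)) 1)
    (hy : y ∈ Set.Icc (exp (-η)) 1) :
    ∃ a ∈ Set.Icc (0 : ℝ) 1, x * exp (η * a ^ 2) = y * exp (η * (a - 1) ^ 2) := by
  refine isPreconnected_Icc.intermediate_value₂ (Set.left_mem_Icc.2 zero_le_one)
    (Set.right_mem_Icc.2 zero_le_one) (by fun_prop) (by fun_prop) ?_ ?_
  · norm_num
    linarith [hx.2, exp_neg_le_iff_one_le_mul_exp.1 hy.1]
  · norm_num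
    linarith [hy.2, exp_neg_le_iff_one_le_mul_exp.1 hx.1]

/-- The square loss (f-ω)² on [0,1]×{0,1} is η-mixable for every 0 < η ≤ 2. -/
theorem square_loss_mixable (η : ℝ) (hη0 : 0 < η) (hη2 : η ≤ 2)
    (N : ℕ) (q : Fin N → ℝ) (hq0 : ∀ i, 0 ≤ q i) (hq1 : ∑ i, q i = 1)
    (f : Fin N → ℝ) (hf : ∀ i, f i ∈ Set.Icc (0:ℝ) 1) :
    ∃ g ∈ Set.Icc (0:ℝ) 1, ∀ ω ∈ ({0, 1} : Set ℝ),
      ∑ i, q i * Real.exp (-η * (f i - ω) ^ 2) ≤ Real.exp (-η * (g - ω) ^ 2) := by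
  set S : ℝ → ℝ := fun ω => ∑ i, q i * exp (-η * (f i - ω) ^ 2)
  have hS (ω : ℝ) (hω : ω ∈ Set.Icc 0 1) : S ω ∈ Set.Icc (exp (-η)) 1 :=
    (convex_Icc _ _).sum_mem (fun i _ => hq0 i) hq1
      fun i _ => exp_neg_mul_sq_mem_Icc hη0.le (hf i) hω
  obtain ⟨a, ha, hbal⟩ := exists_mem_Icc_mul_exp_sq_eq (hS 0 (by simp)) (hS 1 (by simp))
  have hS0 : S 0 = ∑ i, q i * exp (-η * f i ^ 2) := by simp only [S, sub_zero]
  have hline := sum_mul_exp_sq_loss_supporting_line hη0.le hη2 hq0 hq1 f ⟨a, ha⟩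
  rw [← hS0] at hline
  have hr : S 1 * exp (η * (a - 1) ^ 2) ≤ 1 := by linear_combination hline - (1 - a) * hbal
  refine ⟨a, ha, ?_⟩
  rintro ω (rfl | rfl) <;> rw [neg_mul, le_exp_neg_iff_mul_exp_le_one]
  · rwa [sub_zero, hbal]
  · exact hr
end

section
/- For 0 < η ≤ 2, the substitution function f = 1/2 - (1/(2η)) · ln( (Σ_i q_i e^{-η f_i^2}) / (Σ_i q_i e^{-η(1-f_i)^2}) ) satisfies exp(-η(f-ω)^2) ≥ Σ_i q_i exp(-η(f_i-ω)^2) for ω ∈ {0,1}, given any probability vector (q_1,…,q_N) and forecasts f_1,…,f_N ∈ [0,1]. -/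
/-!
Write `α x = exp (-η x²)` and `β x = exp (-η (1 - x)²)`. For `p ∈ [0, 1]` and `0 ≤ η ≤ 2` the
line through `(α p, β p)` with normal `((1 - p) / α p, p / β p)` supports the whole curve
`x ↦ (α x, β x)`: after dividing out, this is Hoeffding's lemma for a centred Bernoulli(`p`)
variable at `t = 2η(x - p)`, because `t² / 8 = η²(x - p)² / 2 ≤ η(x - p)²`. Averaging over the
forecasts puts `(A, B) = (∑ qᵢ α fᵢ, ∑ qᵢ β fᵢ)` below each of these lines. Since
`log (α p / β p) = η(1 - 2p)`, the substitution `p` is exactly the point with `A / α p = B / β p`,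
and `p ∈ [0, 1]` because `exp (-η) ≤ A / B ≤ exp η`; on its own supporting line the common ratio
is therefore at most `1`.
-/

open Finset Real ProbabilityTheory MeasureTheory

lemma bernoulli_centered_mgf_le {p : ℝ} (hp : p ∈ Set.Icc 0 1) (t : ℝ) :
    (1 - p) * exp (-p * t) + p * exp ((1 - p) * t) ≤ exp (t ^ 2 / 8) := by
  have hX := hasSubgaussianMGF_of_mem_Icc (μ := bernoulliMeasure true false ⟨p, hp⟩)
    (X := fun b ↦ (b.toNat : ℝ)) (a := 0) (b := 1) (measurable_of_finite _).aemeasurable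
    (ae_of_all _ fun b ↦ by cases b <;> simp)
  convert hX.mgf_le t using 1 <;> simp [mgf, integral_bernoulliMeasure] <;> ring_nf

lemma exp_neg_sq_tangent {η p : ℝ} (hη0 : 0 ≤ η) (hη2 : η ≤ 2) (hp : p ∈ Set.Icc 0 1) (x : ℝ) :
    (1 - p) * (exp (-η * x ^ 2) / exp (-η * p ^ 2)) +
      p * (exp (-η * (1 - x) ^ 2) / exp (-η * (1 - p) ^ 2)) ≤ 1 := by
  set t := 2 * η * (x - p) with ht
  have h₀ : exp (-η * x ^ 2) / exp (-η * p ^ 2) = exp (-η * (x - p) ^ 2) * exp (-p * t) := by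
    rw [← exp_sub, ← exp_add, ht]; congr 1; ring
  have h₁ : exp (-η * (1 - x) ^ 2) / exp (-η * (1 - p) ^ 2) =
      exp (-η * (x - p) ^ 2) * exp ((1 - p) * t) := by
    rw [← exp_sub, ← exp_add, ht]; congr 1; ring
  calc (1 - p) * (exp (-η * x ^ 2) / exp (-η * p ^ 2)) +
        p * (exp (-η * (1 - x) ^ 2) / exp (-η * (1 - p) ^ 2))
      = exp (-η * (x - p) ^ 2) * ((1 - p) * exp (-p * t) + p * exp ((1 - p) * t)) := by
        rw [h₀, h₁]; ring
    _ ≤ exp (-η * (x - p) ^ 2) * exp (t ^ 2 / 8) := by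
        gcongr
        exact bernoulli_centered_mgf_le hp t
    _ ≤ 1 := by
        rw [← exp_add, exp_le_one_iff, ht]
        nlinarith [mul_nonneg (mul_nonneg hη0 (sub_nonneg.2 hη2)) (sq_nonneg (x - p))]

lemma sum_exp_neg_sq_tangent {ι : Type*} (s : Finset ι) {η p : ℝ} (hη0 : 0 ≤ η) (hη2 : η ≤ 2)
    (hp : p ∈ Set.Icc 0 1) {q : ι → ℝ} (hq0 : ∀ i ∈ s, 0 ≤ q i) (hq1 : ∑ i ∈ s, q i = 1)
    (f : ι → ℝ) :
    (1 - p) * ((∑ i ∈ s, q i * exp (-η * f i ^ 2)) / exp (-η * p ^ 2)) +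
      p * ((∑ i ∈ s, q i * exp (-η * (1 - f i) ^ 2)) / exp (-η * (1 - p) ^ 2)) ≤ 1 := by
  calc _ = ∑ i ∈ s, q i * ((1 - p) * (exp (-η * f i ^ 2) / exp (-η * p ^ 2)) +
          p * (exp (-η * (1 - f i) ^ 2) / exp (-η * (1 - p) ^ 2))) := by
        simp only [sum_div, mul_sum, ← sum_add_distrib]
        exact sum_congr rfl fun i _ ↦ by ring
    _ ≤ ∑ i ∈ s, q i * 1 :=
        sum_le_sum fun i hi ↦ mul_le_mul_of_nonneg_left (exp_neg_sq_tangent hη0 hη2 hp _) (hq0 i hi)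
    _ = 1 := by simp [hq1]

lemma sum_mul_exp_pos {ι : Type*} {s : Finset ι} {q : ι → ℝ} (hq0 : ∀ i ∈ s, 0 ≤ q i)
    (hq1 : ∑ i ∈ s, q i = 1) (g : ι → ℝ) : 0 < ∑ i ∈ s, q i * exp (g i) := by
  obtain ⟨i, hi, hqi⟩ : ∃ i ∈ s, q i ≠ 0 := exists_ne_zero_of_sum_ne_zero (by simp [hq1])
  exact sum_pos' (fun j hj ↦ mul_nonneg (hq0 j hj) (exp_pos _).le)
    ⟨i, hi, mul_pos ((hq0 i hi).lt_of_ne' hqi) (exp_pos _)⟩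

lemma sum_exp_neg_sq_le_exp_mul {ι : Type*} {s : Finset ι} {η : ℝ} (hη : 0 ≤ η) {q f : ι → ℝ}
    (hq0 : ∀ i ∈ s, 0 ≤ q i) (hf : ∀ i ∈ s, 0 ≤ f i) :
    ∑ i ∈ s, q i * exp (-η * f i ^ 2) ≤ exp η * ∑ i ∈ s, q i * exp (-η * (1 - f i) ^ 2) := by
  rw [mul_sum]
  refine sum_le_sum fun i hi ↦ ?_
  rw [mul_left_comm, ← exp_add]
  gcongr
  · exact hq0 i hi
  · nlinarith [mul_nonneg hη (hf i hi)]

noncomputable def squareLossSubst (η a b : ℝ) : ℝ :=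
  1 / 2 - 1 / (2 * η) * log (a / b)

lemma squareLossSubst_mem_Icc {η a b : ℝ} (hη : 0 < η) (ha : 0 < a) (hb : 0 < b)
    (hab : a ≤ exp η * b) (hba : b ≤ exp η * a) : squareLossSubst η a b ∈ Set.Icc 0 1 := by
  have hle : log (a / b) ≤ η := by
    rw [log_le_iff_le_exp (div_pos ha hb), div_le_iff₀ hb]; exact hab
  have hge : -η ≤ log (a / b) := by
    rw [le_log_iff_exp_le (div_pos ha hb), le_div_iff₀ hb, exp_neg, inv_mul_le_iff₀ (exp_pos η)]
    exact hba
  rw [squareLossSubst, one_div_mul_eq_div]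
  constructor
  · rw [sub_nonneg, div_le_iff₀ (by positivity)]; linarith
  · rw [sub_le_comm, le_div_iff₀ (by positivity)]; linarith

lemma squareLossSubst_balance {η a b : ℝ} (hη : η ≠ 0) (ha : 0 < a) (hb : 0 < b) :
    a / exp (-η * squareLossSubst η a b ^ 2) = b / exp (-η * (1 - squareLossSubst η a b) ^ 2) := by
  have hlog : log (a / b) = η * (1 - 2 * squareLossSubst η a b) := by
    unfold squareLossSubst; field_simp; ring
  have ha' : a = b * exp (η * (1 - 2 * squareLossSubst η a b)) := by
    rw [← hlog, exp_log (div_pos ha hb), mul_div_cancel₀ _ hb.ne']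
  rw [div_eq_div_iff (exp_pos _).ne' (exp_pos _).ne']
  nth_rw 1 [ha']
  rw [mul_assoc, ← exp_add]
  congr 2
  ring

/-- The explicit substitution function for the square loss realizes η-mixability
for 0 < η ≤ 2. -/
theorem square_loss_subst (η : ℝ) (hη0 : 0 < η) (hη2 : η ≤ 2)
    (N : ℕ) (q : Fin N → ℝ) (hq0 : ∀ i, 0 ≤ q i) (hq1 : ∑ i, q i = 1)
    (f : Fin N → ℝ) (hf : ∀ i, f i ∈ Set.Icc (0:ℝ) 1) :
    ∀ ω ∈ ({0, 1} : Set ℝ),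
      ∑ i, q i * Real.exp (-η * (f i - ω) ^ 2) ≤
        Real.exp (-η * ((1/2 - (1/(2*η)) *
          Real.log ((∑ i, q i * Real.exp (-η * (f i) ^ 2)) /
            (∑ i, q i * Real.exp (-η * (1 - f i) ^ 2)))) - ω) ^ 2) := by
  set A := ∑ i, q i * exp (-η * f i ^ 2)
  set B := ∑ i, q i * exp (-η * (1 - f i) ^ 2)
  change ∀ ω ∈ ({0, 1} : Set ℝ), _ ≤ exp (-η * (squareLossSubst η A B - ω) ^ 2)
  have hq0' : ∀ i ∈ univ, 0 ≤ q i := fun i _ ↦ hq0 i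
  have hA : 0 < A := sum_mul_exp_pos hq0' hq1 _
  have hB : 0 < B := sum_mul_exp_pos hq0' hq1 _
  have hAB : A ≤ exp η * B := sum_exp_neg_sq_le_exp_mul hη0.le hq0' fun i _ ↦ (hf i).1
  have hBA : B ≤ exp η * A := by
    have := sum_exp_neg_sq_le_exp_mul hη0.le hq0' (f := fun i ↦ 1 - f i)
      fun i _ ↦ sub_nonneg.2 (hf i).2
    simpa only [sub_sub_cancel] using this
  have hF := squareLossSubst_mem_Icc hη0 hA hB hAB hBA
  have hbal := squareLossSubst_balance hη0.ne' hA hB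
  have htan := sum_exp_neg_sq_tangent univ hη0.le hη2 hF hq0' hq1 f
  rw [hbal, ← add_mul, sub_add_cancel, one_mul] at htan
  rintro ω (rfl | rfl)
  · simp only [sub_zero]
    exact (div_le_one (exp_pos _)).1 (hbal ▸ htan)
  · simp only [sub_sq_comm _ (1 : ℝ)]
    exact (div_le_one (exp_pos _)).1 htan
end

section
/- The function f ↦ exp(-η(f-ω)^2) is concave on [0,1] for each fixed ω ∈ {0,1} whenever 0 < η ≤ 1/2; hence the square loss on [0,1]×{0,1} is η-exponentially concave for 0 < η ≤ 1/2. -/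
open Real Set

theorem hasDerivAt_exp_neg_mul_sub_sq (η ω x : ℝ) :
    HasDerivAt (fun x => exp (-η * (x - ω) ^ 2))
      (-2 * η * (x - ω) * exp (-η * (x - ω) ^ 2)) x := by
  have hsq : HasDerivAt (fun x => -η * (x - ω) ^ 2) (-η * (2 * (x - ω))) x := by
    simpa using (((hasDerivAt_id x).sub_const ω).pow 2).const_mul (-η)
  exact hsq.exp.congr_deriv (by ring)

theorem hasDerivAt_deriv_exp_neg_mul_sub_sq (η ω x : ℝ) :
    HasDerivAt (fun x => -2 * η * (x - ω) * exp (-η * (x - ω) ^ 2))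
      (2 * η * (2 * η * (x - ω) ^ 2 - 1) * exp (-η * (x - ω) ^ 2)) x := by
  have hlin : HasDerivAt (fun x => -2 * η * (x - ω)) (-2 * η) x := by
    simpa using ((hasDerivAt_id x).sub_const ω).const_mul (-2 * η)
  exact (hlin.fun_mul (hasDerivAt_exp_neg_mul_sub_sq η ω x)).congr_deriv (by ring)

theorem concaveOn_exp_neg_mul_sub_sq {η ω : ℝ} (hη : 0 ≤ η) {s : Set ℝ} (hs : Convex ℝ s)
    (hsη : ∀ x ∈ s, 2 * η * (x - ω) ^ 2 ≤ 1) :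
    ConcaveOn ℝ s (fun x => exp (-η * (x - ω) ^ 2)) := by
  refine concaveOn_of_hasDerivWithinAt2_nonpos hs
    (fun x _ => (hasDerivAt_exp_neg_mul_sub_sq η ω x).continuousAt.continuousWithinAt)
    (fun x _ => (hasDerivAt_exp_neg_mul_sub_sq η ω x).hasDerivWithinAt)
    (fun x _ => (hasDerivAt_deriv_exp_neg_mul_sub_sq η ω x).hasDerivWithinAt) ?_
  intro x hx
  have hfactor : 2 * η * (2 * η * (x - ω) ^ 2 - 1) ≤ 0 :=
    mul_nonpos_of_nonneg_of_nonpos (by positivity)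
      (sub_nonpos.mpr (hsη x (interior_subset hx)))
  exact mul_nonpos_of_nonpos_of_nonneg hfactor (exp_pos _).le

theorem sq_sub_le_one_of_mem_Icc {x y : ℝ} (hx : x ∈ Icc (0 : ℝ) 1) (hy : y ∈ Icc (0 : ℝ) 1) :
    (x - y) ^ 2 ≤ 1 := by
  rw [sq_le_one_iff_abs_le_one, abs_le]
  constructor <;> linarith [hx.1, hx.2, hy.1, hy.2]

/-- For 0 < η ≤ 1/2 the map f ↦ exp(-η(f-ω)²) is concave on [0,1] for each
ω ∈ {0,1}; i.e. the square loss is η-exponentially concave. -/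
theorem square_loss_exp_concave (η : ℝ) (hη0 : 0 < η) (hη : η ≤ 1/2) :
    ∀ ω ∈ ({0, 1} : Set ℝ),
      ConcaveOn ℝ (Set.Icc (0:ℝ) 1) (fun f => Real.exp (-η * (f - ω) ^ 2)) := by
  intro ω hω
  have hω01 : ω ∈ Icc (0 : ℝ) 1 := by
    rcases hω with rfl | rfl <;> norm_num
  refine concaveOn_exp_neg_mul_sub_sq hη0.le (convex_Icc 0 1) fun x hx => ?_
  calc 2 * η * (x - ω) ^ 2 ≤ 2 * η * 1 := by
        gcongr
        exact sq_sub_le_one_of_mem_Icc hx hω01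
    _ ≤ 1 := by linarith
end

section
/- If the source loss λ(f,y) is η-mixable, then the generalized d-dimensional loss λ(𝐟,𝐲) = Σ_{s=1}^d λ(f^s, y^s) is (η/d)-mixable: given experts' vector forecasts 𝐜_1,…,𝐜_N ∈ Γ^d and a probability vector p, applying the substitution coordinatewise yields 𝐟 with exp(-(η/d) λ(𝐟,𝐲)) ≥ Σ_i p_i exp(-(η/d) λ(𝐜_i,𝐲)) for all 𝐲 ∈ Ω^d. -/
open Finset

/-!
Write `exp (-(η/d) λ(𝐜, 𝐲)) = ∏ₛ exp (-η λ(cˢ, yˢ)) ^ (1/d)`. The finite Hölder inequality with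
`d` equal exponents `1/d`, taken against the weights `p`, bounds the mixture of these products by
the product of the coordinatewise mixtures `(∑ᵢ pᵢ exp (-η λ(cᵢˢ, yˢ))) ^ (1/d)`, and
`η`-mixability of `λ` bounds each of those mixtures by `exp (-η λ(Subst, yˢ))`.
-/

theorem sum_mul_prod_rpow_le_prod_sum_mul_rpow {ι κ : Type*} [Fintype ι] [Fintype κ]
    (p : ι → ℝ) (w : κ → ℝ) (a : ι → κ → ℝ) (hp : ∀ i, 0 ≤ p i) (hw : ∀ k, 0 ≤ w k)
    (hw1 : ∑ k, w k = 1) (ha : ∀ i k, 0 ≤ a i k) (hS : ∀ k, 0 < ∑ i, p i * a i k) :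
    ∑ i, p i * ∏ k, a i k ^ w k ≤ ∏ k, (∑ i, p i * a i k) ^ w k := by
  set S : κ → ℝ := fun k => ∑ i, p i * a i k
  have amgm : ∀ i, ∏ k, a i k ^ w k ≤ (∑ k, w k * (a i k / S k)) * ∏ k, S k ^ w k := by
    intro i
    -- normalize by `S`, then apply the weighted AM-GM inequality
    have hsplit : ∏ k, a i k ^ w k = (∏ k, (a i k / S k) ^ w k) * ∏ k, S k ^ w k := by
      rw [← prod_mul_distrib]
      refine prod_congr rfl fun k _ => ?_
      rw [← Real.mul_rpow (div_nonneg (ha i k) (hS k).le) (hS k).le,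
        div_mul_cancel₀ _ (hS k).ne']
    rw [hsplit]
    gcongr
    · exact prod_nonneg fun k _ => Real.rpow_nonneg (hS k).le _
    · exact Real.geom_mean_le_arith_mean_weighted univ w _ (fun k _ => hw k) hw1
        (fun k _ => div_nonneg (ha i k) (hS k).le)
  have hmix : ∑ i, p i * ∑ k, w k * (a i k / S k) = 1 := by
    calc ∑ i, p i * ∑ k, w k * (a i k / S k)
        = ∑ k, w k * ((∑ i, p i * a i k) / S k) := by
          simp only [mul_sum, sum_div]
          rw [sum_comm]
          exact sum_congr rfl fun k _ => sum_congr rfl fun i _ => by ring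
      _ = 1 := by simp only [S, div_self (hS _).ne', mul_one, hw1]
  calc ∑ i, p i * ∏ k, a i k ^ w k
      ≤ ∑ i, p i * ((∑ k, w k * (a i k / S k)) * ∏ k, S k ^ w k) :=
        sum_le_sum fun i _ => mul_le_mul_of_nonneg_left (amgm i) (hp i)
    _ = ∏ k, S k ^ w k := by simp only [← mul_assoc, ← sum_mul, hmix, one_mul]

theorem Real.exp_mul_sum_eq_prod_exp_rpow {κ : Type*} [Fintype κ] (x w : ℝ) (g : κ → ℝ) :
    Real.exp (x * w * ∑ k, g k) = ∏ k, Real.exp (x * g k) ^ w := by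
  simp only [← Real.exp_mul, ← Real.exp_sum, mul_sum]
  exact congrArg Real.exp (sum_congr rfl fun k _ => by ring)

theorem sum_mul_exp_pos_s6 {ι : Type*} [Fintype ι] (p : ι → ℝ) (x : ι → ℝ) (hp0 : ∀ i, 0 ≤ p i)
    (hp1 : ∑ i, p i = 1) : 0 < ∑ i, p i * Real.exp (x i) := by
  obtain ⟨i, -, hi⟩ := exists_ne_zero_of_sum_ne_zero (hp1.trans_ne one_ne_zero)
  exact sum_pos' (fun j _ => mul_nonneg (hp0 j) (Real.exp_pos _).le)
    ⟨i, mem_univ i, mul_pos ((hp0 i).lt_of_ne' hi) (Real.exp_pos _)⟩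

theorem generalized_loss_mixable_general {Γ Ω : Type*} (L : Γ → Ω → ℝ) (η : ℝ)
    (d N : ℕ) (hd : 0 < d)
    (Subst : (Fin N → Γ) → (Fin N → ℝ) → Γ)
    (hSubst : ∀ (e : Fin N → Γ) (p : Fin N → ℝ), (∀ i, 0 ≤ p i) → ∑ i, p i = 1 →
      ∀ y : Ω, ∑ i, p i * Real.exp (-η * L (e i) y) ≤ Real.exp (-η * L (Subst e p) y))
    (c : Fin N → Fin d → Γ) (p : Fin N → ℝ)
    (hp0 : ∀ i, 0 ≤ p i) (hp1 : ∑ i, p i = 1) :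
    ∀ Y : Fin d → Ω,
      ∑ i, p i * Real.exp (-(η / d) * ∑ s, L (c i s) (Y s)) ≤
        Real.exp (-(η / d) * ∑ s, L (Subst (fun i => c i s) p) (Y s)) := by
  intro Y
  have hw1 : ∑ _s : Fin d, (d : ℝ)⁻¹ = 1 := by
    simp [Nat.cast_ne_zero.mpr hd.ne']
  have hS : ∀ s, 0 < ∑ i, p i * Real.exp (-η * L (c i s) (Y s)) :=
    fun s => sum_mul_exp_pos_s6 p _ hp0 hp1
  simp only [div_eq_mul_inv, ← neg_mul, Real.exp_mul_sum_eq_prod_exp_rpow]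
  calc ∑ i, p i * ∏ s, Real.exp (-η * L (c i s) (Y s)) ^ (d : ℝ)⁻¹
      ≤ ∏ s, (∑ i, p i * Real.exp (-η * L (c i s) (Y s))) ^ (d : ℝ)⁻¹ :=
        sum_mul_prod_rpow_le_prod_sum_mul_rpow p _ _ hp0 (fun _ => by positivity) hw1
          (fun _ _ => (Real.exp_pos _).le) hS
    _ ≤ ∏ s, Real.exp (-η * L (Subst (fun i => c i s) p) (Y s)) ^ (d : ℝ)⁻¹ := by
        refine prod_le_prod (fun s _ => Real.rpow_nonneg (hS s).le _) fun s _ => ?_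
        exact Real.rpow_le_rpow (hS s).le (hSubst (fun i => c i s) p hp0 hp1 (Y s))
          (by positivity)

/-- If the source loss λ is η-mixable via a substitution function, then the
d-dimensional sum loss is (η/d)-mixable, realized by coordinatewise substitution. -/
theorem generalized_loss_mixable {Γ Ω : Type*} (L : Γ → Ω → ℝ) (η : ℝ) (hη : 0 < η)
    (d N : ℕ) (hd : 0 < d)
    (Subst : (Fin N → Γ) → (Fin N → ℝ) → Γ)
    (hSubst : ∀ (e : Fin N → Γ) (p : Fin N → ℝ), (∀ i, 0 ≤ p i) → ∑ i, p i = 1 →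
      ∀ y : Ω, ∑ i, p i * Real.exp (-η * L (e i) y) ≤ Real.exp (-η * L (Subst e p) y))
    (c : Fin N → Fin d → Γ) (p : Fin N → ℝ)
    (hp0 : ∀ i, 0 ≤ p i) (hp1 : ∑ i, p i = 1) :
    ∀ Y : Fin d → Ω,
      ∑ i, p i * Real.exp (-(η / d) * ∑ s, L (c i s) (Y s)) ≤
        Real.exp (-(η / d) * ∑ s, L (Subst (fun i => c i s) p) (Y s)) :=
  generalized_loss_mixable_general L η d N hd Subst hSubst c p hp0 hp1
end

section
/- Regret bound for the Aggregating Algorithm: suppose λ is η-mixable and at every step t the learner's forecast f_t satisfies exp(-η λ(f_t, y_t)) ≥ Σ_i w*_{i,t} exp(-η λ(f_{i,t}, y_t)), where weights start at w_{i,1} = 1/N, are updated by w_{i,t+1} = w_{i,t} e^{-η λ(f_{i,t}, y_t)}, and w*_{i,t} = w_{i,t}/Σ_j w_{j,t}. Then for every T and every expert i, Σ_{t=1}^T λ(f_t,y_t) ≤ Σ_{t=1}^T λ(f_{i,t},y_t) + (ln N)/η. -/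
open Finset

/-!
The total weight `W t = ∑ j, w t j` is a potential. Mixability makes it shrink at each step at
least by the factor `exp (-η · learner's loss)`, so `W T ≤ W 0 · exp (-η · learner's total loss)`.
On the other hand `W T` dominates the weight of any single expert `i`, which is
`w 0 i · exp (-η · expert i's total loss)`. Taking logarithms gives the regret bound, with
`log (W 0 / w 0 i) = log N` for the uniform prior.
-/

theorem Finset.sum_mul_le_sum_mul_of_sum_div_mul_le {ι : Type*} (s : Finset ι) {v e : ι → ℝ}
    {c : ℝ} (hv : 0 < ∑ j ∈ s, v j) (h : ∑ i ∈ s, (v i / ∑ j ∈ s, v j) * e i ≤ c) :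
    ∑ i ∈ s, v i * e i ≤ (∑ j ∈ s, v j) * c :=
  calc ∑ i ∈ s, v i * e i = (∑ j ∈ s, v j) * ∑ i ∈ s, (v i / ∑ j ∈ s, v j) * e i := by
        rw [mul_sum]
        refine sum_congr rfl fun i _ => ?_
        field_simp
    _ ≤ (∑ j ∈ s, v j) * c := mul_le_mul_of_nonneg_left h hv.le

namespace AggregatingAlgorithm

variable {ι : Type*} {η : ℝ} {ℓ : ι → ℕ → ℝ} {m : ℕ → ℝ} {w : ℕ → ι → ℝ}

theorem weight_eq_mul_exp (hwt : ∀ t i, w (t + 1) i = w t i * Real.exp (-η * ℓ i t))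
    (t : ℕ) (i : ι) : w t i = w 0 i * Real.exp (-η * ∑ s ∈ range t, ℓ i s) := by
  induction t with
  | zero => simp
  | succ t ih => rw [hwt, ih, sum_range_succ, mul_add, Real.exp_add, mul_assoc]

variable [Fintype ι]

theorem sum_weight_le_mul_exp (hwt : ∀ t i, w (t + 1) i = w t i * Real.exp (-η * ℓ i t))
    (hpos : ∀ t, 0 < ∑ j, w t j)
    (hmix : ∀ t, ∑ i, (w t i / ∑ j, w t j) * Real.exp (-η * ℓ i t) ≤ Real.exp (-η * m t))
    (T : ℕ) : ∑ j, w T j ≤ (∑ j, w 0 j) * Real.exp (-η * ∑ t ∈ range T, m t) := by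
  induction T with
  | zero => simp
  | succ T ih =>
    calc ∑ j, w (T + 1) j = ∑ j, w T j * Real.exp (-η * ℓ j T) := by simp only [hwt]
      _ ≤ (∑ j, w T j) * Real.exp (-η * m T) :=
        sum_mul_le_sum_mul_of_sum_div_mul_le _ (hpos T) (hmix T)
      _ ≤ (∑ j, w 0 j) * Real.exp (-η * ∑ t ∈ range T, m t) * Real.exp (-η * m T) := by
        gcongr
      _ = (∑ j, w 0 j) * Real.exp (-η * ∑ t ∈ range (T + 1), m t) := by
        rw [sum_range_succ, mul_add, Real.exp_add, mul_assoc]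

theorem sum_le_sum_add_log_div (hη : 0 < η) (hw0 : ∀ i, 0 < w 0 i)
    (hwt : ∀ t i, w (t + 1) i = w t i * Real.exp (-η * ℓ i t))
    (hmix : ∀ t, ∑ i, (w t i / ∑ j, w t j) * Real.exp (-η * ℓ i t) ≤ Real.exp (-η * m t))
    (T : ℕ) (i : ι) :
    ∑ t ∈ range T, m t ≤ ∑ t ∈ range T, ℓ i t + Real.log ((∑ j, w 0 j) / w 0 i) / η := by
  have hw : ∀ t j, 0 < w t j := fun t j => by
    rw [weight_eq_mul_exp hwt]
    exact mul_pos (hw0 j) (Real.exp_pos _)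
  have hW : ∀ t, 0 < ∑ j, w t j := fun t => sum_pos (fun j _ => hw t j) ⟨i, mem_univ i⟩
  have hsingle : w 0 i * Real.exp (-η * ∑ t ∈ range T, ℓ i t) ≤
      (∑ j, w 0 j) * Real.exp (-η * ∑ t ∈ range T, m t) := by
    rw [← weight_eq_mul_exp hwt]
    exact (single_le_sum (fun j _ => (hw T j).le) (mem_univ i)).trans
      (sum_weight_le_mul_exp hwt hW hmix T)
  have hlog := Real.log_le_log (mul_pos (hw0 i) (Real.exp_pos _)) hsingle
  rw [Real.log_mul (hw0 i).ne' (Real.exp_ne_zero _), Real.log_mul (hW 0).ne' (Real.exp_ne_zero _),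
    Real.log_exp, Real.log_exp] at hlog
  rw [Real.log_div (hW 0).ne' (hw0 i).ne', ← sub_le_iff_le_add', le_div_iff₀ hη]
  linarith

end AggregatingAlgorithm

theorem aa_regret_bound_general {Γ Ω : Type*} (L : Γ → Ω → ℝ)
    (η : ℝ) (hη : 0 < η) (N : ℕ)
    (f : Fin N → ℕ → Γ) (g : ℕ → Γ) (y : ℕ → Ω) (w : ℕ → Fin N → ℝ)
    (hw0 : ∀ i, w 0 i = 1 / N)
    (hwt : ∀ t i, w (t + 1) i = w t i * Real.exp (-η * L (f i t) (y t)))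
    (hmix : ∀ t, ∑ i, (w t i / ∑ j, w t j) * Real.exp (-η * L (f i t) (y t)) ≤
      Real.exp (-η * L (g t) (y t))) :
    ∀ (T : ℕ) (i : Fin N),
      ∑ t ∈ Finset.range T, L (g t) (y t) ≤
        ∑ t ∈ Finset.range T, L (f i t) (y t) + Real.log N / η := by
  intro T i
  have hN : (0 : ℝ) < N := Nat.cast_pos.mpr i.pos
  have hW0 : ∑ j, w 0 j = 1 := by simp [hw0, hN.ne']
  simpa [hW0, hw0] using
    AggregatingAlgorithm.sum_le_sum_add_log_div (m := fun t => L (g t) (y t)) hη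
      (by simp [hw0, hN]) hwt hmix T i

/-- Regret bound for the Aggregating Algorithm: the learner's cumulative loss
exceeds each expert's cumulative loss by at most (ln N)/η. -/
theorem aa_regret_bound {Γ Ω : Type*} (L : Γ → Ω → ℝ) (hL : ∀ f y, 0 ≤ L f y)
    (η : ℝ) (hη : 0 < η) (N : ℕ) (hN : 0 < N)
    (f : Fin N → ℕ → Γ) (g : ℕ → Γ) (y : ℕ → Ω) (w : ℕ → Fin N → ℝ)
    (hw0 : ∀ i, w 0 i = 1 / N)
    (hwt : ∀ t i, w (t + 1) i = w t i * Real.exp (-η * L (f i t) (y t)))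
    (hmix : ∀ t, ∑ i, (w t i / ∑ j, w t j) * Real.exp (-η * L (f i t) (y t)) ≤
      Real.exp (-η * L (g t) (y t))) :
    ∀ (T : ℕ) (i : Fin N),
      ∑ t ∈ Finset.range T, L (g t) (y t) ≤
        ∑ t ∈ Finset.range T, L (f i t) (y t) + Real.log N / η :=
  aa_regret_bound_general L η hη N f g y w hw0 hwt hmix
end

section
/- Discounted regret bound for AA with confidence: suppose λ is η-mixable, confidence levels p_{i,t} ∈ [0,1], weights w_{i,1} = 1/N updated by w_{i,t+1} = w_{i,t} exp(-η(p_{i,t} l_{i,t} + (1-p_{i,t}) h_t)) where l_{i,t} = λ(f_{i,t},y_t), h_t = λ(f_t,y_t), and the learner's forecast f_t satisfies exp(-η h_t) ≥ Σ_i w^p_{i,t} exp(-η l_{i,t}) with w^p_{i,t} = p_{i,t} w_{i,t} / Σ_j p_{j,t} w_{j,t}. Then for every expert i and every T, Σ_{t=1}^T p_{i,t}(h_t - l_{i,t}) ≤ (ln N)/η. -/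
/-!
Track the weights as a potential. Convexity of `exp` splits each updated weight into a
`p`-part, which the mixability of the learner's forecast bounds by the learner's loss, and a
`(1 - p)`-part, which is already charged the learner's loss. Hence the total weight is at most
`exp (-η Σₜ hₜ)`, while expert `i` alone keeps weight `N⁻¹ exp (-η Σₜ (pᵢₜ lᵢₜ + (1 - pᵢₜ) hₜ))`;
comparing the logarithms gives the bound.
-/

open Finset Real

lemma eq_mul_exp_sum_of_succ_eq {u a : ℕ → ℝ} (hu : ∀ t, u (t + 1) = u t * exp (a t))
    (t : ℕ) : u t = u 0 * exp (∑ s ∈ range t, a s) := by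
  induction t with
  | zero => simp
  | succ t ih => rw [hu, ih, sum_range_succ, exp_add, mul_assoc]

lemma le_mul_exp_sum_of_succ_le {u a : ℕ → ℝ} (hu : ∀ t, u (t + 1) ≤ u t * exp (a t))
    (t : ℕ) : u t ≤ u 0 * exp (∑ s ∈ range t, a s) := by
  induction t with
  | zero => simp
  | succ t ih =>
    calc u (t + 1) ≤ u t * exp (a t) := hu t
      _ ≤ u 0 * exp (∑ s ∈ range t, a s) * exp (a t) := by gcongr
      _ = u 0 * exp (∑ s ∈ range (t + 1), a s) := by rw [sum_range_succ, exp_add, mul_assoc]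

lemma sum_mul_le_mul_of_sum_div_mul_le {ι : Type*} [Fintype ι] {a x : ι → ℝ} {c : ℝ}
    (hS : 0 < ∑ j, a j) (h : ∑ j, a j / (∑ k, a k) * x j ≤ c) :
    ∑ j, a j * x j ≤ (∑ j, a j) * c := by
  simp_rw [div_mul_eq_mul_div, ← sum_div, div_le_iff₀ hS] at h
  linarith

lemma sum_mul_exp_confidence_le {ι : Type*} [Fintype ι] {η h : ℝ} {p w l : ι → ℝ}
    (hp : ∀ j, p j ∈ Set.Icc (0 : ℝ) 1) (hw : ∀ j, 0 ≤ w j)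
    (hmix : ∑ j, p j * w j * exp (-η * l j) ≤ (∑ j, p j * w j) * exp (-η * h)) :
    ∑ j, w j * exp (-η * (p j * l j + (1 - p j) * h)) ≤ (∑ j, w j) * exp (-η * h) := by
  have hconvex : ∀ j, w j * exp (-η * (p j * l j + (1 - p j) * h)) ≤
      p j * w j * exp (-η * l j) + (1 - p j) * w j * exp (-η * h) := fun j => by
    have := convexOn_exp.2 (Set.mem_univ (-η * l j)) (Set.mem_univ (-η * h))
      (hp j).1 (sub_nonneg.2 (hp j).2) (add_sub_cancel _ _)
    simp only [smul_eq_mul] at this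
    calc w j * exp (-η * (p j * l j + (1 - p j) * h))
        = w j * exp (p j * (-η * l j) + (1 - p j) * (-η * h)) := by ring_nf
      _ ≤ w j * (p j * exp (-η * l j) + (1 - p j) * exp (-η * h)) := by gcongr; exact hw j
      _ = _ := by ring
  calc ∑ j, w j * exp (-η * (p j * l j + (1 - p j) * h))
      ≤ ∑ j, p j * w j * exp (-η * l j) + (∑ j, (1 - p j) * w j) * exp (-η * h) := by
        rw [sum_mul, ← sum_add_distrib]
        exact sum_le_sum fun j _ => hconvex j
    _ ≤ (∑ j, p j * w j + ∑ j, (1 - p j) * w j) * exp (-η * h) := by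
        rw [add_mul]
        gcongr
    _ = (∑ j, w j) * exp (-η * h) := by
        rw [← sum_add_distrib]
        congr 1
        exact sum_congr rfl fun j _ => by ring

lemma sub_le_log_of_one_div_mul_exp_le_exp {n a b : ℝ} (hn : 0 < n)
    (h : 1 / n * exp a ≤ exp b) : a - b ≤ log n := by
  rw [← log_le_log_iff (by positivity) (exp_pos _), log_mul (by positivity) (exp_pos _).ne',
    log_exp, log_exp, one_div, log_inv] at h
  linarith

theorem aa_confidence_regret_general {Γ Ω : Type*} (L : Γ → Ω → ℝ)
    (η : ℝ) (hη : 0 < η) (N : ℕ)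
    (f : Fin N → ℕ → Γ) (g : ℕ → Γ) (y : ℕ → Ω)
    (p : Fin N → ℕ → ℝ) (hp : ∀ i t, p i t ∈ Set.Icc (0:ℝ) 1)
    (w : ℕ → Fin N → ℝ)
    (hw0 : ∀ i, w 0 i = 1 / N)
    (hwt : ∀ t i, w (t + 1) i = w t i *
      Real.exp (-η * (p i t * L (f i t) (y t) + (1 - p i t) * L (g t) (y t))))
    (hpos : ∀ t, 0 < ∑ j, p j t * w t j)
    (hmix : ∀ t, ∑ i, (p i t * w t i / ∑ j, p j t * w t j) *
        Real.exp (-η * L (f i t) (y t)) ≤ Real.exp (-η * L (g t) (y t))) :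
    ∀ (T : ℕ) (i : Fin N),
      ∑ t ∈ Finset.range T, p i t * (L (g t) (y t) - L (f i t) (y t)) ≤
        Real.log N / η := by
  intro T i
  have hN : (0 : ℝ) < N := by exact_mod_cast i.pos
  have hclosed : ∀ t j, w t j = 1 / N *
      exp (∑ s ∈ range t, -η * (p j s * L (f j s) (y s) + (1 - p j s) * L (g s) (y s))) :=
    fun t j => hw0 j ▸ eq_mul_exp_sum_of_succ_eq (u := (w · j)) (fun t => hwt t j) t
  have hw : ∀ t j, 0 ≤ w t j := fun t j => by rw [hclosed]; positivity
  have htotal : ∀ t, ∑ j, w (t + 1) j ≤ (∑ j, w t j) * exp (-η * L (g t) (y t)) := fun t => by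
    simp_rw [hwt]
    exact sum_mul_exp_confidence_le (hp · t) (hw t)
      (sum_mul_le_mul_of_sum_div_mul_le (hpos t) (hmix t))
  have hbound : w T i ≤ exp (∑ s ∈ range T, -η * L (g s) (y s)) :=
    calc w T i ≤ ∑ j, w T j := single_le_sum (fun j _ => hw T j) (mem_univ i)
      _ ≤ (∑ j, w 0 j) * exp (∑ s ∈ range T, -η * L (g s) (y s)) :=
        le_mul_exp_sum_of_succ_le (u := fun t => ∑ j, w t j) htotal T
      _ = exp (∑ s ∈ range T, -η * L (g s) (y s)) := by simp [hw0, hN.ne']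
  have hregret : η * ∑ t ∈ range T, p i t * (L (g t) (y t) - L (f i t) (y t)) =
      ∑ s ∈ range T, -η * (p i s * L (f i s) (y s) + (1 - p i s) * L (g s) (y s)) -
        ∑ s ∈ range T, -η * L (g s) (y s) := by
    rw [mul_sum, ← sum_sub_distrib]
    exact sum_congr rfl fun t _ => by ring
  rw [le_div_iff₀ hη, mul_comm, hregret]
  exact sub_le_log_of_one_div_mul_exp_le_exp hN (hclosed T i ▸ hbound)

/-- Discounted regret bound for AA with confidence levels:
Σₜ p_{i,t}(hₜ - l_{i,t}) ≤ (ln N)/η for every expert i. -/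
theorem aa_confidence_regret {Γ Ω : Type*} (L : Γ → Ω → ℝ) (hL : ∀ f y, 0 ≤ L f y)
    (η : ℝ) (hη : 0 < η) (N : ℕ) (hN : 0 < N)
    (f : Fin N → ℕ → Γ) (g : ℕ → Γ) (y : ℕ → Ω)
    (p : Fin N → ℕ → ℝ) (hp : ∀ i t, p i t ∈ Set.Icc (0:ℝ) 1)
    (w : ℕ → Fin N → ℝ)
    (hw0 : ∀ i, w 0 i = 1 / N)
    (hwt : ∀ t i, w (t + 1) i = w t i *
      Real.exp (-η * (p i t * L (f i t) (y t) + (1 - p i t) * L (g t) (y t))))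
    (hpos : ∀ t, 0 < ∑ j, p j t * w t j)
    (hmix : ∀ t, ∑ i, (p i t * w t i / ∑ j, p j t * w t j) *
        Real.exp (-η * L (f i t) (y t)) ≤ Real.exp (-η * L (g t) (y t))) :
    ∀ (T : ℕ) (i : Fin N),
      ∑ t ∈ Finset.range T, p i t * (L (g t) (y t) - L (f i t) (y t)) ≤
        Real.log N / η :=
  aa_confidence_regret_general L η hη N f g y p hp w hw0 hwt hpos hmix
end

section
/- Piecewise-constant approximation bound for CRPS: let F be a probability distribution function on [a,b], let a = z_0 < z_1 < … < z_d = b be a uniform grid with Δ = (b-a)/d, and define F_d(u) = F(z_i) for z_{i-1} < u ≤ z_i. Then |CRPS(F,y) - CRPS(F_d,y)| ≤ 2Δ for every y ∈ [a,b]. -/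
open MeasureTheory Finset

/-- Heaviside function: 0 for x < 0 and 1 for x ≥ 0. -/
noncomputable def Heav (x : ℝ) : ℝ := if x < 0 then 0 else 1

/-- Continuous Ranked Probability Score on the interval [a,b]. -/
noncomputable def CRPS (a b : ℝ) (F : ℝ → ℝ) (y : ℝ) : ℝ :=
  ∫ u in a..b, (F u - Heav (u - y)) ^ 2

/-- A probability distribution function on [a,b]: nondecreasing, right-continuous,
with values in [0,1], F(a)=0 and F(b)=1. -/
def IsPDF (a b : ℝ) (F : ℝ → ℝ) : Prop :=
  MonotoneOn F (Set.Icc a b) ∧ (∀ x ∈ Set.Icc a b, F x ∈ Set.Icc (0:ℝ) 1) ∧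
  F a = 0 ∧ F b = 1 ∧ ∀ x ∈ Set.Ico a b, ContinuousWithinAt F (Set.Ici x) x

/-!
On each grid cell `(z i, z (i+1)]` the approximation replaces `F u` by the larger value
`F (z (i+1))`. Since all values lie in `[0, 1]`, the two squared integrands differ pointwise by at
most `2 (F (z (i+1)) - F u) ≤ 2 (F (z (i+1)) - F (z i))`, so the CRPS integrals over the cell differ
by at most `2 Δ (F (z (i+1)) - F (z i))`. Summing over the cells telescopes to
`2 Δ (F b - F a) = 2 Δ`.
-/

open Set
open scoped Interval

lemma heav_mem_Icc (x : ℝ) : Heav x ∈ Icc (0 : ℝ) 1 := by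
  unfold Heav; split_ifs <;> norm_num

lemma monotone_heav : Monotone Heav := by
  intro s t hst
  unfold Heav
  split_ifs <;> linarith

lemma abs_sq_sub_sub_sq_sub_le {p q t : ℝ} (hp : 0 ≤ p) (hpq : p ≤ q) (hq : q ≤ 1)
    (ht : t ∈ Icc (0 : ℝ) 1) : |(p - t) ^ 2 - (q - t) ^ 2| ≤ 2 * (q - p) := by
  rw [abs_le]
  constructor <;> nlinarith [ht.1, ht.2]

lemma IntervalIntegrable.sq_sub_of_mem_Icc {f g : ℝ → ℝ} {a b : ℝ}
    (hf : IntervalIntegrable f volume a b) (hg : IntervalIntegrable g volume a b)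
    (hf01 : ∀ u ∈ Ι a b, f u ∈ Icc (0 : ℝ) 1) (hg01 : ∀ u ∈ Ι a b, g u ∈ Icc (0 : ℝ) 1) :
    IntervalIntegrable (fun u => (f u - g u) ^ 2) volume a b := by
  have hbound : ∀ u ∈ Ι a b, ‖f u - g u‖ ≤ 1 := fun u hu => by
    have hfu := hf01 u hu
    have hgu := hg01 u hu
    rw [Real.norm_eq_abs, abs_le]
    constructor <;> linarith [hfu.1, hfu.2, hgu.1, hgu.2]
  have hfg := intervalIntegrable_iff.mp (hf.sub hg)
  rw [intervalIntegrable_iff]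
  simp only [sq]
  exact hfg.mul_bdd hfg.aestronglyMeasurable
    ((ae_restrict_iff' measurableSet_uIoc).mpr (.of_forall hbound))

section Cell

variable {F G h : ℝ → ℝ} {c e : ℝ}

lemma intervalIntegrable_sq_sub_of_monotoneOn (hce : c ≤ e) (hF : MonotoneOn F (Icc c e))
    (hF01 : MapsTo F (Icc c e) (Icc 0 1)) (hh : IntervalIntegrable h volume c e)
    (hh01 : ∀ u, h u ∈ Icc (0 : ℝ) 1) :
    IntervalIntegrable (fun u => (F u - h u) ^ 2) volume c e :=
  (hF.mono (uIcc_of_le hce).subset).intervalIntegrable.sq_sub_of_mem_Icc hh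
    (fun _ hu => hF01 (Set.Ioc_subset_Icc_self (uIoc_of_le hce ▸ hu))) (fun u _ => hh01 u)

lemma intervalIntegrable_sq_sub_of_eqOn_const {k : ℝ} (hce : c ≤ e)
    (hG : EqOn G (fun _ => k) (Ioc c e)) (hk : k ∈ Icc (0 : ℝ) 1)
    (hh : IntervalIntegrable h volume c e) (hh01 : ∀ u, h u ∈ Icc (0 : ℝ) 1) :
    IntervalIntegrable (fun u => (G u - h u) ^ 2) volume c e := by
  rw [← uIoc_of_le hce] at hG
  exact (intervalIntegrable_const.congr hG.symm).sq_sub_of_mem_Icc hh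
    (fun u hu => hG hu ▸ hk) (fun u _ => hh01 u)

lemma abs_integral_sq_sub_sub_integral_sq_sub_le (hce : c ≤ e) (hF : MonotoneOn F (Icc c e))
    (hF01 : MapsTo F (Icc c e) (Icc 0 1)) (hh : IntervalIntegrable h volume c e)
    (hh01 : ∀ u, h u ∈ Icc (0 : ℝ) 1) (hG : EqOn G (fun _ => F e) (Ioc c e)) :
    |(∫ u in c..e, (F u - h u) ^ 2) - ∫ u in c..e, (G u - h u) ^ 2|
      ≤ 2 * (e - c) * (F e - F c) := by
  have hc : c ∈ Icc c e := ⟨le_rfl, hce⟩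
  have he : e ∈ Icc c e := ⟨hce, le_rfl⟩
  rw [← intervalIntegral.integral_sub
      (intervalIntegrable_sq_sub_of_monotoneOn hce hF hF01 hh hh01)
      (intervalIntegrable_sq_sub_of_eqOn_const hce hG (hF01 he) hh hh01),
    ← Real.norm_eq_abs, mul_right_comm, ← abs_of_nonneg (sub_nonneg.mpr hce)]
  refine intervalIntegral.norm_integral_le_of_norm_le_const fun u hu => ?_
  rw [uIoc_of_le hce] at hu
  have hu' := Set.Ioc_subset_Icc_self hu
  rw [Real.norm_eq_abs, hG hu]
  calc _ ≤ 2 * (F e - F u) :=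
        abs_sq_sub_sub_sq_sub_le (hF01 hu').1 (hF hu' he hu.2) (hF01 he).2 (hh01 u)
    _ ≤ 2 * (F e - F c) := by linarith [hF hc hu' hu.1.le]

end Cell

theorem abs_integral_sq_sub_sub_integral_sq_sub_le_of_partition {F G h : ℝ → ℝ} {z : ℕ → ℝ}
    {n : ℕ} {Δ : ℝ} (hz : Monotone z) (hmesh : ∀ i < n, z (i + 1) - z i ≤ Δ)
    (hF : MonotoneOn F (Icc (z 0) (z n))) (hF01 : MapsTo F (Icc (z 0) (z n)) (Icc 0 1))
    (hh : IntervalIntegrable h volume (z 0) (z n)) (hh01 : ∀ u, h u ∈ Icc (0 : ℝ) 1)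
    (hG : ∀ i < n, EqOn G (fun _ => F (z (i + 1))) (Ioc (z i) (z (i + 1)))) :
    |(∫ u in z 0..z n, (F u - h u) ^ 2) - ∫ u in z 0..z n, (G u - h u) ^ 2|
      ≤ 2 * Δ * (F (z n) - F (z 0)) := by
  have hcell : ∀ i < n, Icc (z i) (z (i + 1)) ⊆ Icc (z 0) (z n) := fun i hi =>
    Icc_subset_Icc (hz (Nat.zero_le i)) (hz hi)
  have hstep : ∀ i, z i ≤ z (i + 1) := fun i => hz (Nat.le_succ i)
  have hhcell : ∀ i < n, IntervalIntegrable h volume (z i) (z (i + 1)) := fun i hi =>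
    hh.mono_set (by rw [uIcc_of_le (hstep i), uIcc_of_le (hz (Nat.zero_le n))]; exact hcell i hi)
  have hFcell : ∀ i < n, MonotoneOn F (Icc (z i) (z (i + 1))) := fun i hi => hF.mono (hcell i hi)
  have hF01cell : ∀ i < n, MapsTo F (Icc (z i) (z (i + 1))) (Icc 0 1) := fun i hi =>
    hF01.mono_left (hcell i hi)
  rw [← intervalIntegral.sum_integral_adjacent_intervals fun i hi =>
      intervalIntegrable_sq_sub_of_monotoneOn (hstep i) (hFcell i hi) (hF01cell i hi)
        (hhcell i hi) hh01,
    ← intervalIntegral.sum_integral_adjacent_intervals fun i hi =>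
      intervalIntegrable_sq_sub_of_eqOn_const (hstep i) (hG i hi)
        (hF01cell i hi ⟨hstep i, le_rfl⟩) (hhcell i hi) hh01,
    ← Finset.sum_sub_distrib]
  calc _ ≤ ∑ i ∈ range n, |(∫ u in z i..z (i + 1), (F u - h u) ^ 2)
          - ∫ u in z i..z (i + 1), (G u - h u) ^ 2| := Finset.abs_sum_le_sum_abs _ _
    _ ≤ ∑ i ∈ range n, 2 * Δ * (F (z (i + 1)) - F (z i)) := by
      refine Finset.sum_le_sum fun i hi => ?_
      have hi := Finset.mem_range.mp hi
      have hmono := hFcell i hi ⟨le_rfl, hstep i⟩ ⟨hstep i, le_rfl⟩ (hstep i)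
      refine (abs_integral_sq_sub_sub_integral_sq_sub_le (hstep i) (hFcell i hi) (hF01cell i hi)
        (hhcell i hi) hh01 (hG i hi)).trans ?_
      exact mul_le_mul_of_nonneg_right (by linarith [hmesh i hi]) (sub_nonneg.mpr hmono)
    _ = 2 * Δ * (F (z n) - F (z 0)) := by
      rw [← Finset.mul_sum, Finset.sum_range_sub fun i => F (z i)]

theorem crps_grid_approx_general (a b : ℝ) (hab : a < b) (F : ℝ → ℝ) (hF : IsPDF a b F)
    (d : ℕ) (hd : 0 < d) (Fd : ℝ → ℝ)
    (hFd : ∀ i : ℕ, i < d →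
      ∀ u ∈ Set.Ioc (a + i * ((b - a) / d)) (a + (i + 1) * ((b - a) / d)),
        Fd u = F (a + (i + 1) * ((b - a) / d)))
    (y : ℝ) :
    |CRPS a b F y - CRPS a b Fd y| ≤ 2 * ((b - a) / d) := by
  obtain ⟨hmono, hrange, hFa, hFb, -⟩ := hF
  set z : ℕ → ℝ := fun i => a + i * ((b - a) / d)
  have hz0 : z 0 = a := by simp [z]
  have hzd : z d = b := by
    simp only [z]
    field_simp
    ring
  have hzmono : Monotone z := fun i j hij => by
    have hΔ : 0 ≤ (b - a) / d := div_nonneg (sub_nonneg.mpr hab.le) d.cast_nonneg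
    simp only [z]
    gcongr
  have key := abs_integral_sq_sub_sub_integral_sq_sub_le_of_partition (G := Fd)
    (h := fun u => Heav (u - y)) (Δ := (b - a) / d) hzmono
    (fun i _ => le_of_eq (by simp only [z, Nat.cast_succ]; ring))
    (hz0 ▸ hzd ▸ hmono) (hz0 ▸ hzd ▸ hrange)
    ((monotone_heav.comp fun _ _ h => sub_le_sub_right h y).intervalIntegrable)
    (fun u => heav_mem_Icc (u - y))
    (fun i hi u hu => by
      simpa only [z, Nat.cast_succ] using hFd i hi u (by simpa only [z, Nat.cast_succ] using hu))
  rw [hz0, hzd, hFa, hFb, sub_zero, mul_one] at key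
  exact key

/-- Piecewise-constant approximation: |CRPS(F,y) - CRPS(F_d,y)| ≤ 2Δ where
Δ = (b-a)/d and F_d is the upper piecewise-constant approximation on the grid. -/
theorem crps_grid_approx (a b : ℝ) (hab : a < b) (F : ℝ → ℝ) (hF : IsPDF a b F)
    (d : ℕ) (hd : 0 < d) (Fd : ℝ → ℝ)
    (hFd : ∀ i : ℕ, i < d →
      ∀ u ∈ Set.Ioc (a + i * ((b - a) / d)) (a + (i + 1) * ((b - a) / d)),
        Fd u = F (a + (i + 1) * ((b - a) / d)))
    (y : ℝ) (hy : y ∈ Set.Icc a b) :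
    |CRPS a b F y - CRPS a b Fd y| ≤ 2 * ((b - a) / d) :=
  crps_grid_approx_general a b hab F hF d hd Fd hFd y
end

section
/- The aggregation formula preserves distribution functions: if F_1,…,F_N are probability distribution functions on [a,b] and (q_1,…,q_N) is a probability vector, then F(u) = 1/2 - (1/4) ln( (Σ_i q_i e^{-2 F_i(u)^2}) / (Σ_i q_i e^{-2(1-F_i(u))^2}) ) takes values in [0,1], is nondecreasing in u, and satisfies F(a) = 0 and F(b) = 1. -/
open MeasureTheory Finset

/-!
Write the aggregate as `1/2 - (log A - log B)/4` with `A = ∑ qᵢ exp(-2 Fᵢ²)` and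
`B = ∑ qᵢ exp(-2 (1 - Fᵢ)²)`. For `t ∈ [0,1]` the weight `exp(-2 t²)` lies in `[e⁻², 1]` and
decreases in `t`, so the mixtures `A` and `B` lie in `[e⁻², 1]`, their logarithms in `[-2, 0]`,
and as the `Fᵢ` increase `log A` decreases while `log B` increases. At `a` all `Fᵢ` vanish,
so `A = 1`, `B = e⁻²` and the aggregate is `0`; at `b` the roles are exchanged.
-/

open Real

section WeightedSum

variable {ι : Type*} [Fintype ι] {q f : ι → ℝ} {c : ℝ}

theorem weighted_sum_le (hq0 : ∀ i, 0 ≤ q i) (hq1 : ∑ i, q i = 1) (hf : ∀ i, f i ≤ c) :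
    ∑ i, q i * f i ≤ c :=
  calc ∑ i, q i * f i ≤ ∑ i, q i * c :=
        sum_le_sum fun i _ => mul_le_mul_of_nonneg_left (hf i) (hq0 i)
    _ = c := by rw [← sum_mul, hq1, one_mul]

theorem le_weighted_sum (hq0 : ∀ i, 0 ≤ q i) (hq1 : ∑ i, q i = 1) (hf : ∀ i, c ≤ f i) :
    c ≤ ∑ i, q i * f i :=
  calc c = ∑ i, q i * c := by rw [← sum_mul, hq1, one_mul]
    _ ≤ ∑ i, q i * f i := sum_le_sum fun i _ => mul_le_mul_of_nonneg_left (hf i) (hq0 i)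

end WeightedSum

theorem exp_neg_two_mul_sq_antitoneOn : AntitoneOn (fun t : ℝ => exp (-2 * t ^ 2)) (Set.Ici 0) :=
  fun s hs _ _ hst => exp_le_exp.2 <| by nlinarith [Set.mem_Ici.1 hs]

theorem exp_neg_two_mul_sq_mem_Icc {t : ℝ} (ht : t ∈ Set.Icc (0 : ℝ) 1) :
    exp (-2 * t ^ 2) ∈ Set.Icc (exp (-2)) 1 := by
  obtain ⟨ht0, ht1⟩ := ht
  constructor
  · exact exp_le_exp.2 <| by nlinarith
  · exact exp_le_one_iff.2 <| by nlinarith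

section Aggregate

variable {ι : Type*} [Fintype ι] {q : ι → ℝ}

noncomputable def expMix (q x : ι → ℝ) : ℝ :=
  ∑ i, q i * exp (-2 * x i ^ 2)

noncomputable def crpsAggregate (q x : ι → ℝ) : ℝ :=
  1/2 - (1/4) * log (expMix q x / expMix q (fun i => 1 - x i))

theorem expMix_pos (hq0 : ∀ i, 0 ≤ q i) (hq1 : ∑ i, q i = 1) (x : ι → ℝ) :
    0 < expMix q x := by
  obtain ⟨j, -, hj⟩ : ∃ j ∈ univ, (0 : ι → ℝ) j < q j :=
    exists_lt_of_sum_lt (by simp [hq1])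
  exact sum_pos' (fun i _ => mul_nonneg (hq0 i) (exp_pos _).le)
    ⟨j, mem_univ j, mul_pos hj (exp_pos _)⟩

theorem expMix_const (hq1 : ∑ i, q i = 1) (c : ℝ) :
    expMix q (fun _ => c) = exp (-2 * c ^ 2) := by
  rw [expMix, ← sum_mul, hq1, one_mul]

theorem expMix_antitone (hq0 : ∀ i, 0 ≤ q i) {x y : ι → ℝ} (hx : ∀ i, 0 ≤ x i) (hxy : x ≤ y) :
    expMix q y ≤ expMix q x :=
  sum_le_sum fun i _ => mul_le_mul_of_nonneg_left
    (exp_neg_two_mul_sq_antitoneOn (hx i) ((hx i).trans (hxy i)) (hxy i)) (hq0 i)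

theorem log_expMix_mem_Icc (hq0 : ∀ i, 0 ≤ q i) (hq1 : ∑ i, q i = 1) {x : ι → ℝ}
    (hx : ∀ i, x i ∈ Set.Icc (0 : ℝ) 1) : log (expMix q x) ∈ Set.Icc (-2) 0 := by
  have hlower : exp (-2) ≤ expMix q x :=
    le_weighted_sum hq0 hq1 fun i => (exp_neg_two_mul_sq_mem_Icc (hx i)).1
  have hupper : expMix q x ≤ 1 :=
    weighted_sum_le hq0 hq1 fun i => (exp_neg_two_mul_sq_mem_Icc (hx i)).2
  refine ⟨?_, log_nonpos (expMix_pos hq0 hq1 x).le hupper⟩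
  simpa only [log_exp] using log_le_log (exp_pos _) hlower

theorem crpsAggregate_eq (hq0 : ∀ i, 0 ≤ q i) (hq1 : ∑ i, q i = 1) (x : ι → ℝ) :
    crpsAggregate q x =
      1/2 - (1/4) * (log (expMix q x) - log (expMix q (fun i => 1 - x i))) := by
  rw [crpsAggregate, log_div (expMix_pos hq0 hq1 _).ne' (expMix_pos hq0 hq1 _).ne']

theorem crpsAggregate_mem_Icc (hq0 : ∀ i, 0 ≤ q i) (hq1 : ∑ i, q i = 1) {x : ι → ℝ}
    (hx : ∀ i, x i ∈ Set.Icc (0 : ℝ) 1) : crpsAggregate q x ∈ Set.Icc (0 : ℝ) 1 := by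
  have hA := log_expMix_mem_Icc hq0 hq1 hx
  have hB := log_expMix_mem_Icc hq0 hq1 (x := fun i => 1 - x i)
    fun i => ⟨sub_nonneg.2 (hx i).2, sub_le_self _ (hx i).1⟩
  rw [crpsAggregate_eq hq0 hq1]
  constructor <;> linarith [hA.1, hA.2, hB.1, hB.2]

theorem crpsAggregate_mono (hq0 : ∀ i, 0 ≤ q i) (hq1 : ∑ i, q i = 1) {x y : ι → ℝ}
    (hx : ∀ i, 0 ≤ x i) (hy : ∀ i, y i ≤ 1) (hxy : x ≤ y) :
    crpsAggregate q x ≤ crpsAggregate q y := by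
  have hA : log (expMix q y) ≤ log (expMix q x) :=
    log_le_log (expMix_pos hq0 hq1 y) (expMix_antitone hq0 hx hxy)
  have hB : log (expMix q (fun i => 1 - x i)) ≤ log (expMix q (fun i => 1 - y i)) :=
    log_le_log (expMix_pos hq0 hq1 _)
      (expMix_antitone hq0 (fun i => sub_nonneg.2 (hy i)) fun i => sub_le_sub_left (hxy i) 1)
  rw [crpsAggregate_eq hq0 hq1, crpsAggregate_eq hq0 hq1]
  linarith

theorem crpsAggregate_zero (hq1 : ∑ i, q i = 1) : crpsAggregate q (fun _ => 0) = 0 := by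
  simp only [crpsAggregate, sub_zero, expMix_const hq1, div_eq_mul_inv, ← exp_neg, ← exp_add,
    log_exp]
  norm_num

theorem crpsAggregate_one (hq1 : ∑ i, q i = 1) : crpsAggregate q (fun _ => 1) = 1 := by
  simp only [crpsAggregate, sub_self, expMix_const hq1, div_eq_mul_inv, ← exp_neg, ← exp_add,
    log_exp]
  norm_num

end Aggregate

theorem crps_aggregation_is_pdf_general (a b : ℝ) (N : ℕ)
    (F : Fin N → ℝ → ℝ) (hF : ∀ i, IsPDF a b (F i))
    (q : Fin N → ℝ) (hq0 : ∀ i, 0 ≤ q i) (hq1 : ∑ i, q i = 1)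
    (G : ℝ → ℝ)
    (hG : ∀ u, G u = 1/2 - (1/4) * Real.log
      ((∑ i, q i * Real.exp (-2 * (F i u) ^ 2)) /
       (∑ i, q i * Real.exp (-2 * (1 - F i u) ^ 2)))) :
    (∀ u ∈ Set.Icc a b, G u ∈ Set.Icc (0:ℝ) 1) ∧
    MonotoneOn G (Set.Icc a b) ∧ G a = 0 ∧ G b = 1 := by
  have hG' : ∀ u, G u = crpsAggregate q (fun i => F i u) := hG
  have hFmem : ∀ u ∈ Set.Icc a b, ∀ i, F i u ∈ Set.Icc (0 : ℝ) 1 :=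
    fun u hu i => (hF i).2.1 u hu
  have hFa : ∀ i, F i a = 0 := fun i => (hF i).2.2.1
  have hFb : ∀ i, F i b = 1 := fun i => (hF i).2.2.2.1
  refine ⟨fun u hu => ?_, fun u hu v hv huv => ?_, ?_, ?_⟩
  · rw [hG']
    exact crpsAggregate_mem_Icc hq0 hq1 (hFmem u hu)
  · rw [hG', hG']
    exact crpsAggregate_mono hq0 hq1 (fun i => (hFmem u hu i).1) (fun i => (hFmem v hv i).2)
      fun i => (hF i).1 hu hv huv
  · simp only [hG', hFa, crpsAggregate_zero hq1]
  · simp only [hG', hFb, crpsAggregate_one hq1]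

/-- The AA aggregation formula maps probability distribution functions to a
probability distribution function: values in [0,1], nondecreasing, G(a)=0, G(b)=1. -/
theorem crps_aggregation_is_pdf (a b : ℝ) (hab : a < b) (N : ℕ)
    (F : Fin N → ℝ → ℝ) (hF : ∀ i, IsPDF a b (F i))
    (q : Fin N → ℝ) (hq0 : ∀ i, 0 ≤ q i) (hq1 : ∑ i, q i = 1)
    (G : ℝ → ℝ)
    (hG : ∀ u, G u = 1/2 - (1/4) * Real.log
      ((∑ i, q i * Real.exp (-2 * (F i u) ^ 2)) /
       (∑ i, q i * Real.exp (-2 * (1 - F i u) ^ 2)))) :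
    (∀ u ∈ Set.Icc a b, G u ∈ Set.Icc (0:ℝ) 1) ∧
    MonotoneOn G (Set.Icc a b) ∧ G a = 0 ∧ G b = 1 :=
  crps_aggregation_is_pdf_general a b N F hF q hq0 hq1 G hG
end

section
/- Regret bound for Algorithm 3 (AA with CRPS): with initial weights w_{i,1} = 1/N, updates w_{i,t+1} = w_{i,t} e^{-(2/(b-a)) CRPS(F_{i,t}, y_t)}, and learner's forecast F_t given by the AA substitution formula F_t(u) = 1/2 - (1/4) ln( (Σ_i w*_{i,t} e^{-2 F_{i,t}(u)^2})/(Σ_i w*_{i,t} e^{-2(1-F_{i,t}(u))^2}) ), for every T: Σ_{t=1}^T CRPS(F_t, y_t) ≤ min_{1≤i≤N} Σ_{t=1}^T CRPS(F_{i,t}, y_t) + ((b-a)/2) ln N. -/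
open MeasureTheory Finset

/-!
The square loss `(γ - ω) ^ 2`, `ω ∈ {0, 1}`, is `2`-mixable with substitution function
`squareSubst`: for a probability vector `W` and predictions `pᵢ ∈ [0, 1]`,
`(γ - ω) ^ 2 ≤ -(1/2) log ∑ Wᵢ exp (-2 (pᵢ - ω) ^ 2)`, and the inequality behind this,
expert by expert, is Hoeffding's lemma for a two-valued random variable. At each `u` the CRPS
integrand is such a square loss with `ω = H(u - y)`; averaging over `[a, b]` and using Jensen's
inequality for the convex function `x ↦ log ∑ Wᵢ exp xᵢ` bounds the learner's CRPS in round `t` by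
`((b - a) / 2) (log S_t - log S_{t+1})`, where `S_t` is the total weight. This telescopes, and
`S_T ≥ w_{i,T}` gives the regret bound.
-/

open Real ProbabilityTheory
open scoped Interval

theorem bernoulli_mgf_le {q : ℝ} (hq₀ : 0 ≤ q) (hq₁ : q ≤ 1) (s : ℝ) :
    q * exp ((1 - q) * s) + (1 - q) * exp (-q * s) ≤ exp (s ^ 2 / 8) := by
  let p : unitInterval := ⟨q, hq₀, hq₁⟩
  have hb : ∀ᵐ x ∂Ber(1 - q, -q, p), x ∈ Set.Icc (-q) (1 - q) := by
    rw [ae_iff]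
    exact bernoulliMeasure_apply_of_notMem_of_notMem p (by measurability) (by simp) (by simp)
  have hc : ∫ x, id x ∂Ber(1 - q, -q, p) = 0 := by
    rw [integral_bernoulliMeasure]; simp [p]; ring
  have h := (hasSubgaussianMGF_of_mem_Icc_of_integral_eq_zero aemeasurable_id hb hc).mgf_le s
  rw [mgf, integral_bernoulliMeasure] at h
  norm_num [p] at h
  ring_nf at h ⊢
  exact h

theorem square_loss_exp_tangent {γ : ℝ} (hγ₀ : 0 ≤ γ) (hγ₁ : γ ≤ 1) (p : ℝ) :
    γ * exp (2 * (1 - γ) ^ 2 - 2 * (1 - p) ^ 2) + (1 - γ) * exp (2 * γ ^ 2 - 2 * p ^ 2) ≤ 1 := by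
  set s := 4 * (p - γ)
  calc _ = (γ * exp ((1 - γ) * s) + (1 - γ) * exp (-γ * s)) / exp (s ^ 2 / 8) := by
        rw [add_div, mul_div_assoc, mul_div_assoc, ← exp_sub, ← exp_sub]
        congr 3 <;> ring
    _ ≤ 1 := (div_le_one (exp_pos _)).2 (bernoulli_mgf_le hγ₀ hγ₁ s)

section

variable {ι : Type*} [Fintype ι]

-- The learner's forecast `F_t(u)` of the paper is `squareSubst w*_{·,t} (F_{·,t}(u))`.
noncomputable def squareSubst (W p : ι → ℝ) : ℝ :=
  1 / 2 - 1 / 4 * log ((∑ i, W i * exp (-2 * p i ^ 2)) / ∑ i, W i * exp (-2 * (1 - p i) ^ 2))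

theorem sum_mul_exp_pos_s17 {W : ι → ℝ} (hW : ∀ i, 0 ≤ W i) (hW1 : 0 < ∑ i, W i) (x : ι → ℝ) :
    0 < ∑ i, W i * exp (x i) := by
  obtain ⟨i, -, hi⟩ := exists_lt_of_sum_lt (s := univ) (f := fun _ => (0 : ℝ)) (by simpa using hW1)
  exact sum_pos' (fun j _ => mul_nonneg (hW j) (exp_pos _).le)
    ⟨i, mem_univ i, mul_pos hi (exp_pos _)⟩

theorem sum_mul_exp_le_exp_mul_sum {W x y : ι → ℝ} (hW : ∀ i, 0 ≤ W i) {c : ℝ}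
    (h : ∀ i, x i ≤ y i + c) : ∑ i, W i * exp (x i) ≤ exp c * ∑ i, W i * exp (y i) := by
  rw [mul_sum]
  refine sum_le_sum fun i _ => ?_
  rw [mul_left_comm, ← exp_add]
  exact mul_le_mul_of_nonneg_left (exp_le_exp.2 (by linarith [h i])) (hW i)

theorem squareSubst_mem_Icc {W p : ι → ℝ} (hW : ∀ i, 0 ≤ W i) (hW1 : ∑ i, W i = 1)
    (hp : ∀ i, p i ∈ Set.Icc (0 : ℝ) 1) : squareSubst W p ∈ Set.Icc (0 : ℝ) 1 := by
  have hW1' : 0 < ∑ i, W i := hW1 ▸ one_pos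
  set A := ∑ i, W i * exp (-2 * p i ^ 2)
  set B := ∑ i, W i * exp (-2 * (1 - p i) ^ 2)
  have hA : 0 < A := sum_mul_exp_pos_s17 hW hW1' _
  have hB : 0 < B := sum_mul_exp_pos_s17 hW hW1' _
  have hAB : log A ≤ 2 + log B := by
    rw [← log_exp 2, ← log_mul (exp_pos 2).ne' hB.ne']
    refine log_le_log hA (sum_mul_exp_le_exp_mul_sum hW fun i => ?_)
    nlinarith [(hp i).1, (hp i).2]
  have hBA : log B ≤ 2 + log A := by
    rw [← log_exp 2, ← log_mul (exp_pos 2).ne' hA.ne']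
    refine log_le_log hB (sum_mul_exp_le_exp_mul_sum hW fun i => ?_)
    nlinarith [(hp i).1, (hp i).2]
  rw [squareSubst, log_div hA.ne' hB.ne']
  constructor <;> linarith

theorem sq_sub_squareSubst_le {W p : ι → ℝ} (hW : ∀ i, 0 ≤ W i) (hW1 : ∑ i, W i = 1)
    (hp : ∀ i, p i ∈ Set.Icc (0 : ℝ) 1) {ω : ℝ} (hω : ω = 0 ∨ ω = 1) :
    (squareSubst W p - ω) ^ 2 ≤ -(1 / 2) * log (∑ i, W i * exp (-2 * (p i - ω) ^ 2)) := by
  obtain ⟨hγ₀, hγ₁⟩ := squareSubst_mem_Icc hW hW1 hp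
  have hW1' : 0 < ∑ i, W i := hW1 ▸ one_pos
  set γ := squareSubst W p with hγ
  set A := ∑ i, W i * exp (-2 * p i ^ 2)
  set B := ∑ i, W i * exp (-2 * (1 - p i) ^ 2)
  have hA : 0 < A := sum_mul_exp_pos_s17 hW hW1' _
  have hB : 0 < B := sum_mul_exp_pos_s17 hW hW1' _
  -- `γ` is chosen exactly so that the two exponents in `hsum` agree.
  have hAB : 2 * (1 - γ) ^ 2 + log B = 2 * γ ^ 2 + log A := by
    rw [hγ, squareSubst, log_div hA.ne' hB.ne']; ring
  have hsum : γ * exp (2 * (1 - γ) ^ 2 + log B) + (1 - γ) * exp (2 * γ ^ 2 + log A) ≤ 1 :=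
    calc _ = ∑ i, W i * (γ * exp (2 * (1 - γ) ^ 2 - 2 * (1 - p i) ^ 2)
          + (1 - γ) * exp (2 * γ ^ 2 - 2 * p i ^ 2)) := by
          rw [exp_add, exp_add, exp_log hA, exp_log hB]
          simp only [A, B, mul_sum, ← sum_add_distrib]
          refine sum_congr rfl fun i _ => ?_
          have hsplit (x y : ℝ) : exp (x - 2 * y) = exp x * exp (-2 * y) := by
            rw [← exp_add]; ring_nf
          rw [hsplit, hsplit]
          ring
      _ ≤ ∑ i, W i * 1 :=
          sum_le_sum fun i _ => mul_le_mul_of_nonneg_left (square_loss_exp_tangent hγ₀ hγ₁ _) (hW i)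
      _ = 1 := by simp [hW1]
  rw [hAB, ← add_mul, add_sub_cancel, one_mul, exp_le_one_iff] at hsum
  rcases hω with rfl | rfl
  · simp only [sub_zero]; linarith
  · simp_rw [sub_sq_comm _ (1 : ℝ)]; nlinarith

-- The tangent-plane inequality at `c` of the convex function `x ↦ log ∑ i, W i * exp (x i)`.
theorem log_sum_exp_add_sum_mul_sub_le {W : ι → ℝ} (hW : ∀ i, 0 ≤ W i) (hW1 : 0 < ∑ i, W i)
    (c x : ι → ℝ) :
    log (∑ i, W i * exp (c i)) + ∑ i, W i * exp (c i) / (∑ j, W j * exp (c j)) * (x i - c i)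
      ≤ log (∑ i, W i * exp (x i)) := by
  set Z := ∑ j, W j * exp (c j)
  have hZ : 0 < Z := sum_mul_exp_pos_s17 hW hW1 c
  have hq₀ : ∀ i ∈ (univ : Finset ι), 0 ≤ W i * exp (c i) / Z :=
    fun i _ => div_nonneg (mul_nonneg (hW i) (exp_pos _).le) hZ.le
  have hq₁ : ∑ i, W i * exp (c i) / Z = 1 := by rw [← sum_div, div_self hZ.ne']
  have hexp := convexOn_exp.map_sum_le hq₀ hq₁ fun i _ => Set.mem_univ (x i - c i)
  have hmix : ∑ i, (W i * exp (c i) / Z) • exp (x i - c i) = (∑ i, W i * exp (x i)) / Z := by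
    rw [sum_div]
    refine sum_congr rfl fun i _ => ?_
    rw [smul_eq_mul, exp_sub]
    field_simp
  rw [hmix, ← le_log_iff_exp_le (div_pos (sum_mul_exp_pos_s17 hW hW1 x) hZ),
    log_div (sum_mul_exp_pos_s17 hW hW1 x).ne' hZ.ne'] at hexp
  simp only [smul_eq_mul] at hexp
  linarith

theorem log_sum_exp_integral_le {Ω : Type*} [MeasurableSpace Ω] {μ : Measure Ω}
    [IsProbabilityMeasure μ] {W : ι → ℝ} (hW : ∀ i, 0 ≤ W i) (hW1 : 0 < ∑ i, W i)
    {f : ι → Ω → ℝ} (hf : ∀ i, Integrable (f i) μ)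
    (hg : Integrable (fun ω => log (∑ i, W i * exp (f i ω))) μ) :
    log (∑ i, W i * exp (∫ ω, f i ω ∂μ)) ≤ ∫ ω, log (∑ i, W i * exp (f i ω)) ∂μ := by
  set c := fun i => ∫ ω, f i ω ∂μ
  set q := fun i => W i * exp (c i) / ∑ j, W j * exp (c j)
  have hint : ∀ i, Integrable (fun ω => q i * (f i ω - c i)) μ :=
    fun i => ((hf i).sub (integrable_const _)).const_mul _
  calc log (∑ i, W i * exp (c i))
      = ∫ ω, log (∑ i, W i * exp (c i)) + ∑ i, q i * (f i ω - c i) ∂μ := by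
        rw [integral_add (integrable_const _) (integrable_finsetSum _ fun i _ => hint i),
          integral_finsetSum _ fun i _ => hint i]
        have hcentered (i : ι) : ∫ ω, q i * (f i ω - c i) ∂μ = 0 := by
          rw [integral_const_mul, integral_sub (hf i) (integrable_const _)]
          simp [c]
        simp [hcentered]
    _ ≤ ∫ ω, log (∑ i, W i * exp (f i ω)) ∂μ :=
        integral_mono ((integrable_const _).add (integrable_finsetSum _ fun i _ => hint i)) hg
          fun ω => log_sum_exp_add_sum_mul_sub_le hW hW1 c fun i => f i ω

theorem log_sum_mul_exp_mem_Icc {W x : ι → ℝ} (hW : ∀ i, 0 ≤ W i) (hW1 : ∑ i, W i = 1)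
    {lo hi : ℝ} (hx : ∀ i, x i ∈ Set.Icc lo hi) :
    log (∑ i, W i * exp (x i)) ∈ Set.Icc lo hi := by
  have hconst (c : ℝ) : ∑ i, W i * exp c = exp c := by rw [← sum_mul, hW1, one_mul]
  have hlo := sum_mul_exp_le_exp_mul_sum (x := fun _ => lo) (c := 0) hW fun i => by
    simpa using (hx i).1
  have hhi := sum_mul_exp_le_exp_mul_sum (y := fun _ => hi) (c := 0) hW fun i => by
    simpa using (hx i).2
  rw [hconst, exp_zero, one_mul] at hlo hhi
  constructor
  · rw [le_log_iff_exp_le ((exp_pos lo).trans_le hlo)]; exact hlo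
  · rw [log_le_iff_le_exp ((exp_pos lo).trans_le hlo)]; exact hhi

theorem Heav_eq_zero_or_one (x : ℝ) : Heav x = 0 ∨ Heav x = 1 := by
  unfold Heav; split_ifs <;> simp

theorem measurable_Heav : Measurable Heav :=
  Measurable.ite (measurableSet_lt measurable_id measurable_const) measurable_const measurable_const

theorem IsPDF.aemeasurable {a b : ℝ} {F : ℝ → ℝ} (hF : IsPDF a b F) (hab : a ≤ b) :
    AEMeasurable F (volume.restrict (Ι a b)) := by
  rw [Set.uIoc_of_le hab]
  exact aemeasurable_restrict_of_monotoneOn measurableSet_Ioc (hF.1.mono Set.Ioc_subset_Icc_self)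

theorem sq_sub_Heav_mem_Icc {p : ℝ} (hp : p ∈ Set.Icc (0 : ℝ) 1) (x : ℝ) :
    (p - Heav x) ^ 2 ∈ Set.Icc (0 : ℝ) 1 := by
  obtain ⟨h0, h1⟩ := hp
  rcases Heav_eq_zero_or_one x with h | h <;> rw [h] <;> constructor <;> nlinarith

theorem log_sum_exp_interval_average_le {a b : ℝ} (hab : a < b) {W : ι → ℝ}
    (hW : ∀ i, 0 ≤ W i) (hW1 : 0 < ∑ i, W i) {f : ι → ℝ → ℝ}
    (hf : ∀ i, IntegrableOn (f i) (Ι a b))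
    (hg : IntegrableOn (fun u => log (∑ i, W i * exp (f i u))) (Ι a b)) :
    log (∑ i, W i * exp (⨍ u in a..b, f i u)) ≤ ⨍ u in a..b, log (∑ i, W i * exp (f i u)) := by
  have : IsFiniteMeasure (volume.restrict (Ι a b)) := isFiniteMeasure_restrict.2 (by simp)
  have : NeZero (volume.restrict (Ι a b)) := ⟨by simp [sub_ne_zero.2 hab.ne']⟩
  simp only [average_eq']
  exact log_sum_exp_integral_le hW hW1 (fun i => (hf i).to_average) hg.to_average

theorem crps_squareSubst_le {a b : ℝ} (hab : a < b) {W : ι → ℝ} (hW : ∀ i, 0 ≤ W i)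
    (hW1 : ∑ i, W i = 1) {G : ι → ℝ → ℝ} (hGm : ∀ i, AEMeasurable (G i) (volume.restrict (Ι a b)))
    (hG : ∀ i, ∀ u ∈ Set.Icc a b, G i u ∈ Set.Icc (0 : ℝ) 1) (y : ℝ) :
    CRPS a b (fun u => squareSubst W fun i => G i u) y ≤
      -((b - a) / 2) * log (∑ i, W i * exp (-(2 / (b - a)) * CRPS a b (G i) y)) := by
  set μ := volume.restrict (Ι a b)
  have : IsFiniteMeasure μ := isFiniteMeasure_restrict.2 (by simp)
  have hae : ∀ᵐ u ∂μ, u ∈ Set.Icc a b :=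
    ae_restrict_of_forall_mem measurableSet_uIoc fun u hu =>
      Set.Ioc_subset_Icc_self (Set.uIoc_of_le hab.le ▸ hu)
  have hH := measurable_Heav
  set ℓ := fun i u => (G i u - Heav (u - y)) ^ 2
  set g := fun u => log (∑ i, W i * exp (-2 * ℓ i u))
  have hℓint (i : ι) : Integrable (ℓ i) μ :=
    Integrable.of_mem_Icc 0 1 (by fun_prop)
      (hae.mono fun u hu => sq_sub_Heav_mem_Icc (hG i u hu) _)
  have hgint : Integrable g μ :=
    Integrable.of_mem_Icc (-2) 0 (by fun_prop) (hae.mono fun u hu =>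
      log_sum_mul_exp_mem_Icc hW hW1 fun i => by
        obtain ⟨h0, h1⟩ := sq_sub_Heav_mem_Icc (hG i u hu) (u - y); constructor <;> linarith)
  have hmix (u : ℝ) (hu : u ∈ Set.Icc a b) :
      (squareSubst W (fun i => G i u) - Heav (u - y)) ^ 2 ≤ -(1 / 2) * g u :=
    sq_sub_squareSubst_le hW hW1 (fun i => hG i u hu) (Heav_eq_zero_or_one _)
  have hint : Integrable (fun u => (squareSubst W (fun i => G i u) - Heav (u - y)) ^ 2) μ :=
    (hgint.const_mul _).mono' (by unfold squareSubst; fun_prop) (hae.mono fun u hu => by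
      rw [Real.norm_of_nonneg (sq_nonneg _)]; exact hmix u hu)
  have hJ := log_sum_exp_interval_average_le hab hW (hW1 ▸ one_pos)
    (f := fun i u => -2 * ℓ i u) (fun i => (hℓint i).const_mul _) hgint
  simp only [interval_average_eq_div, intervalIntegral.integral_const_mul] at hJ
  calc CRPS a b (fun u => squareSubst W fun i => G i u) y
      ≤ ∫ u in a..b, -(1 / 2) * g u :=
        intervalIntegral.integral_mono_on hab.le (intervalIntegrable_iff.2 hint)
          (intervalIntegrable_iff.2 (hgint.const_mul _)) hmix
    _ = -((b - a) / 2) * ((∫ u in a..b, g u) / (b - a)) := by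
        rw [intervalIntegral.integral_const_mul]; field_simp [(sub_pos.2 hab).ne']
    _ ≤ -((b - a) / 2) * log (∑ i, W i * exp (-2 * CRPS a b (G i) y / (b - a))) :=
        mul_le_mul_of_nonpos_left hJ (by linarith)
    _ = _ := by simp only [neg_mul, neg_div, mul_div_right_comm]

section ExponentialWeights

variable {η : ℝ} {ℓ : ℕ → ι → ℝ} {w : ℕ → ι → ℝ}

theorem exp_weights_eq (hw0 : ∀ i, w 0 i = 1 / Fintype.card ι)
    (hwt : ∀ t i, w (t + 1) i = w t i * exp (-η * ℓ t i)) (T : ℕ) (i : ι) :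
    w T i = exp (-η * ∑ t ∈ range T, ℓ t i) / Fintype.card ι := by
  induction T with
  | zero => simp [hw0]
  | succ T ih => rw [hwt, ih, sum_range_succ, mul_add, exp_add]; ring

theorem exp_weights_pos [Nonempty ι] (hw0 : ∀ i, w 0 i = 1 / Fintype.card ι)
    (hwt : ∀ t i, w (t + 1) i = w t i * exp (-η * ℓ t i)) (t : ℕ) (i : ι) : 0 < w t i := by
  rw [exp_weights_eq hw0 hwt]
  positivity

theorem exp_weights_regret (hη : 0 < η) (hw0 : ∀ i, w 0 i = 1 / Fintype.card ι)
    (hwt : ∀ t i, w (t + 1) i = w t i * exp (-η * ℓ t i)) {L : ℕ → ℝ}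
    (hL : ∀ t, L t ≤ -η⁻¹ * log (∑ i, w t i / (∑ j, w t j) * exp (-η * ℓ t i)))
    (T : ℕ) (i : ι) :
    ∑ t ∈ range T, L t ≤ ∑ t ∈ range T, ℓ t i + η⁻¹ * log (Fintype.card ι) := by
  have : Nonempty ι := ⟨i⟩
  set S := fun t => ∑ j, w t j
  have hS (t : ℕ) : 0 < S t := sum_pos (fun j _ => exp_weights_pos hw0 hwt t j) univ_nonempty
  have hstep (t : ℕ) : L t ≤ η⁻¹ * (log (S t) - log (S (t + 1))) := by
    have hratio : ∑ i, w t i / S t * exp (-η * ℓ t i) = S (t + 1) / S t := by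
      simp only [S, hwt, sum_div]
      exact sum_congr rfl fun j _ => by ring
    have := hL t
    rw [hratio, log_div (hS _).ne' (hS _).ne'] at this
    linarith
  have hS0 : S 0 = 1 := by
    simp only [S, hw0, sum_const, card_univ, nsmul_eq_mul]
    field_simp
  have hST : log (w T i) ≤ log (S T) :=
    log_le_log (exp_weights_pos hw0 hwt T i)
      (single_le_sum (fun j _ => (exp_weights_pos hw0 hwt T j).le) (mem_univ i))
  rw [exp_weights_eq hw0 hwt, log_div (exp_pos _).ne' (by positivity), log_exp] at hST
  calc ∑ t ∈ range T, L t ≤ ∑ t ∈ range T, η⁻¹ * (log (S t) - log (S (t + 1))) :=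
        sum_le_sum fun t _ => hstep t
    _ = η⁻¹ * -log (S T) := by rw [← mul_sum, sum_range_sub', hS0, log_one, zero_sub]
    _ ≤ η⁻¹ * (η * ∑ t ∈ range T, ℓ t i + log (Fintype.card ι)) := by gcongr; linarith
    _ = ∑ t ∈ range T, ℓ t i + η⁻¹ * log (Fintype.card ι) := by field_simp

end ExponentialWeights

end

theorem crps_aa_regret_general (a b : ℝ) (hab : a < b) (N : ℕ)
    (F : Fin N → ℕ → ℝ → ℝ) (hF : ∀ i t, IsPDF a b (F i t))
    (y : ℕ → ℝ)
    (w : ℕ → Fin N → ℝ)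
    (hw0 : ∀ i, w 0 i = 1 / N)
    (hwt : ∀ t i, w (t + 1) i = w t i *
      Real.exp (-(2 / (b - a)) * CRPS a b (F i t) (y t)))
    (Fl : ℕ → ℝ → ℝ)
    (hFl : ∀ t u, Fl t u = 1/2 - (1/4) * Real.log
      ((∑ i, (w t i / ∑ j, w t j) * Real.exp (-2 * (F i t u) ^ 2)) /
       (∑ i, (w t i / ∑ j, w t j) * Real.exp (-2 * (1 - F i t u) ^ 2)))) :
    ∀ (T : ℕ) (i : Fin N),
      ∑ t ∈ Finset.range T, CRPS a b (Fl t) (y t) ≤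
        ∑ t ∈ Finset.range T, CRPS a b (F i t) (y t) +
          ((b - a) / 2) * Real.log N := by
  intro T i
  have : Nonempty (Fin N) := ⟨i⟩
  have hw0' : ∀ i, w 0 i = 1 / Fintype.card (Fin N) := by simpa using hw0
  have hround (t : ℕ) : CRPS a b (Fl t) (y t) ≤ -(2 / (b - a))⁻¹ *
      log (∑ i, w t i / (∑ j, w t j) * exp (-(2 / (b - a)) * CRPS a b (F i t) (y t))) := by
    have hpos := exp_weights_pos hw0' hwt t
    have hS : 0 < ∑ j, w t j := sum_pos (fun j _ => hpos j) univ_nonempty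
    rw [funext (hFl t), inv_div]
    exact crps_squareSubst_le (W := fun i => w t i / ∑ j, w t j) (G := fun i => F i t) hab
      (fun i => (div_pos (hpos i) hS).le) (by rw [← sum_div, div_self hS.ne'])
      (fun i => (hF i t).aemeasurable hab.le) (fun i => (hF i t).2.1) (y t)
  simpa [inv_div] using exp_weights_regret (div_pos two_pos (sub_pos.2 hab)) hw0' hwt hround T i

/-- Regret bound for Algorithm 3 (AA applied to CRPS): the learner's cumulative
CRPS is at most every expert's cumulative CRPS plus ((b-a)/2) ln N. -/
theorem crps_aa_regret (a b : ℝ) (hab : a < b) (N : ℕ) (hN : 0 < N)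
    (F : Fin N → ℕ → ℝ → ℝ) (hF : ∀ i t, IsPDF a b (F i t))
    (y : ℕ → ℝ) (hy : ∀ t, y t ∈ Set.Icc a b)
    (w : ℕ → Fin N → ℝ)
    (hw0 : ∀ i, w 0 i = 1 / N)
    (hwt : ∀ t i, w (t + 1) i = w t i *
      Real.exp (-(2 / (b - a)) * CRPS a b (F i t) (y t)))
    (Fl : ℕ → ℝ → ℝ)
    (hFl : ∀ t u, Fl t u = 1/2 - (1/4) * Real.log
      ((∑ i, (w t i / ∑ j, w t j) * Real.exp (-2 * (F i t u) ^ 2)) /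
       (∑ i, (w t i / ∑ j, w t j) * Real.exp (-2 * (1 - F i t u) ^ 2)))) :
    ∀ (T : ℕ) (i : Fin N),
      ∑ t ∈ Finset.range T, CRPS a b (Fl t) (y t) ≤
        ∑ t ∈ Finset.range T, CRPS a b (F i t) (y t) +
          ((b - a) / 2) * Real.log N :=
  crps_aa_regret_general a b hab N F hF y w hw0 hwt Fl hFl
end
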